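/- In a MAG, suppose X is a vertex with a collider path u = (Y, V₁, …, V_i, X, W₁, …, W_j, Z) on which X is a non-collider, W₁ ∈ Ch(X), and X satisfies the adjacency conditions of removability. If additionally every child of X is not a parent of any spouse of X (forced by acyclicity), then there exists a collider path between Y and Z passing only through the vertices {V₁,…,V_i, W₁,…,W_j, X}. -/

import Mathlib

/-- A mixed graph with directed (`dir x y` : x → y), bidirected and undirected edges. -/
structure MixedGraph (V : Type*) where
  dir : V → V → Prop
  bi : V → V → Prop
  und : V → V → Prop
  bi_symm : ∀ x y, bi x y → bi y x
  und_symm : ∀ x y, und x y → und y x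

namespace MixedGraph

variable {V : Type*}

def adj (G : MixedGraph V) (x y : V) : Prop :=
  G.dir x y ∨ G.dir y x ∨ G.bi x y ∨ G.und x y

/-- There is an arrowhead at `y` on the edge between `x` and `y`. -/
def head (G : MixedGraph V) (x y : V) : Prop := G.dir x y ∨ G.bi x y

def pa (G : MixedGraph V) (x : V) : Set V := {y | G.dir y x}
def child (G : MixedGraph V) (x : V) : Set V := {y | G.dir x y}
def nbr (G : MixedGraph V) (x : V) : Set V := {y | G.und x y}
def spouse (G : MixedGraph V) (x : V) : Set V := {y | G.bi x y}

/-- `x` is an ancestor of `y` (every vertex is an ancestor of itself). -/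
def anc (G : MixedGraph V) (x y : V) : Prop := Relation.ReflTransGen G.dir x y

def ancSet (G : MixedGraph V) (S : Set V) : Set V := {x | ∃ y ∈ S, G.anc x y}

/-- The set of descendants of `x` (including `x` itself). -/
def desc (G : MixedGraph V) (x : V) : Set V := {y | G.anc x y}

/-- A path, encoded as a duplicate-free list of at least two vertices with
consecutive vertices adjacent. -/
def IsPath (G : MixedGraph V) (p : List V) : Prop :=
  p.Chain' G.adj ∧ p.Nodup ∧ 2 ≤ p.length

def IsPathBetween (G : MixedGraph V) (p : List V) (x y : V) : Prop :=
  G.IsPath p ∧ p.head? = some x ∧ p.getLast? = some y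

/-- The vertex at (internal) position `i` of `p` is a collider: both incident
path edges have an arrowhead at it. -/
def ColliderAt (G : MixedGraph V) (p : List V) (i : ℕ) : Prop :=
  ∃ a v c, p[i-1]? = some a ∧ p[i]? = some v ∧ p[i+1]? = some c ∧
    G.head a v ∧ G.head c v

/-- A collider path: every non-endpoint vertex is a collider. -/
def IsColliderPath (G : MixedGraph V) (p : List V) : Prop :=
  G.IsPath p ∧ ∀ i, 1 ≤ i → i + 1 < p.length → G.ColliderAt p i

/-- `p` is an m-connecting path between `x` and `y` relative to `Z`. -/
def MConn (G : MixedGraph V) (p : List V) (x y : V) (Z : Set V) : Prop :=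
  G.IsPathBetween p x y ∧
  ∀ i v, 1 ≤ i → i + 1 < p.length → p[i]? = some v →
    (G.ColliderAt p i → v ∈ G.ancSet ({x, y} ∪ Z)) ∧
    (¬ G.ColliderAt p i → v ∉ Z)

/-- `Z` m-separates `x` and `y` in `G`. -/
def MSep (G : MixedGraph V) (x y : V) (Z : Set V) : Prop :=
  ∀ p, ¬ G.MConn p x y Z

/-- Induced subgraph over a set `S` of vertices. -/
def induce (G : MixedGraph V) (S : Set V) : MixedGraph V where
  dir x y := G.dir x y ∧ x ∈ S ∧ y ∈ S
  bi x y := G.bi x y ∧ x ∈ S ∧ y ∈ S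
  und x y := G.und x y ∧ x ∈ S ∧ y ∈ S
  bi_symm := fun x y h => ⟨G.bi_symm x y h.1, h.2.2, h.2.1⟩
  und_symm := fun x y h => ⟨G.und_symm x y h.1, h.2.2, h.2.1⟩

/-- `X` is removable in `G`: the induced subgraph on the remaining vertices
imposes exactly the same m-separation relations over them as `G`. -/
def Removable (G : MixedGraph V) (X : V) : Prop :=
  ∀ Y W : V, Y ≠ X → W ≠ X → Y ≠ W →
    ∀ Z : Set V, Z ⊆ {v | v ≠ X ∧ v ≠ Y ∧ v ≠ W} →
      (G.MSep Y W Z ↔ (G.induce {v | v ≠ X}).MSep Y W Z)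

/-- Ancestral: no directed cycles, no almost directed cycles, and endpoints of
undirected edges have no parents or spouses. -/
def Ancestral (G : MixedGraph V) : Prop :=
  (∀ x y, G.dir x y → ¬ G.anc y x) ∧
  (∀ x y, G.bi x y → ¬ G.anc y x) ∧
  (∀ x y, G.und x y → ∀ z, ¬ G.dir z x ∧ ¬ G.bi z x)

/-- A maximal ancestral graph: ancestral, and any two non-adjacent vertices are
m-separated by some set. -/
def IsMAG (G : MixedGraph V) : Prop :=
  G.Ancestral ∧
  ∀ x y, x ≠ y → ¬ G.adj x y →
    ∃ Z : Set V, Z ⊆ {v | v ≠ x ∧ v ≠ y} ∧ G.MSep x y Z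

/-- Markov boundary of `x`: the vertices with a collider path to `x`. -/
def Mb (G : MixedGraph V) (x : V) : Set V :=
  {y | ∃ p, G.IsColliderPath p ∧ p.head? = some y ∧ p.getLast? = some x}

/-- District of `x`: vertices joined to `x` by a path of bidirected edges. -/
def district (G : MixedGraph V) (x : V) : Set V :=
  {y | Relation.ReflTransGen G.bi x y}

/-- `Pa⁺(x) = Pa(x) ∪ Dis(x) ∪ Pa(Dis(x)) ∪ N(x)`. -/
def paPlus (G : MixedGraph V) (x : V) : Set V :=
  G.pa x ∪ G.district x ∪ (⋃ y ∈ G.district x, G.pa y) ∪ G.nbr x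

noncomputable def deltaPlus [Fintype V] (G : MixedGraph V) : ℕ :=
  Finset.univ.sup fun z : V => (G.paPlus z).ncard

/-- Condition 1 of the graphical characterization of removability. -/
def RemCond1 (G : MixedGraph V) (X : V) : Prop :=
  ∀ Y Z : V, G.adj X Y → Z ∈ G.child X ∪ G.nbr X → Z ≠ Y → G.adj Y Z

/-- Condition 2 of the graphical characterization of removability. -/
def RemCond2 (G : MixedGraph V) (X : V) : Prop :=
  ∀ (p : List V) (Y Z : V), G.IsColliderPath p → p.head? = some X →
    p.getLast? = some Y → Z ∉ p → (∀ v ∈ p.dropLast, G.dir v Z) → G.adj Y Z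

end MixedGraph

/-!
Let `P` be the vertex preceding `X` on `u`. Condition (1) makes `P` adjacent to the child `W₁`.
If `P ↔ W₁`, the path bypasses `X` directly. If `W₁ → P`, ancestrality forces `X → P`, and
condition (2), applied to the collider paths `X, W₁, …, W_k` whose vertices before `W_k` are all
parents of `P`, makes each `W_k` adjacent to `P`: while `W_k → P` we move on; `P → W_k` would give
`W_{k-1} → P → W_k` against the arrowhead at the collider `W_{k-1}`; so we stop at some `W_k ↔ P`
or at `Z`, and `Y, …, P, W_k, …, Z` is a collider path. The case `P → W₁` is the mirror image,
run along the reversed path towards `Y`.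
-/

namespace MixedGraph

variable {V : Type*} {G : MixedGraph V}

lemma adj_symm {a b : V} (h : G.adj a b) : G.adj b a := by
  rcases h with h | h | h | h
  · exact Or.inr (Or.inl h)
  · exact Or.inl h
  · exact Or.inr (Or.inr (Or.inl (G.bi_symm _ _ h)))
  · exact Or.inr (Or.inr (Or.inr (G.und_symm _ _ h)))

lemma adj_of_head {a b : V} : G.head a b → G.adj a b
  | Or.inl h => Or.inl h
  | Or.inr h => Or.inr (Or.inr (Or.inl h))

lemma Ancestral.not_head_of_anc (hA : G.Ancestral) {a b : V} (hab : G.anc a b) :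
    ¬ G.head b a
  | Or.inl h => hA.1 b a h hab
  | Or.inr h => hA.2.1 b a h hab

lemma Ancestral.dir_of_adj_of_dir_of_dir (hA : G.Ancestral) {X W P : V} (hXW : G.dir X W)
    (hWP : G.dir W P) (hXP : G.adj X P) : G.dir X P := by
  have hanc : G.anc X P := (Relation.ReflTransGen.single hXW).tail hWP
  rcases hXP with h | h | h | h
  · exact h
  · exact absurd (Or.inl h) (hA.not_head_of_anc hanc)
  · exact absurd (Or.inr (G.bi_symm _ _ h)) (hA.not_head_of_anc hanc)
  · exact absurd hWP (hA.2.2 P X (G.und_symm _ _ h) W).1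

lemma colliderAt_append_left {l₁ l₂ : List V} {i : ℕ} (hi : i + 1 < l₁.length) :
    G.ColliderAt (l₁ ++ l₂) i ↔ G.ColliderAt l₁ i := by
  simp only [ColliderAt, List.getElem?_append_left (show i - 1 < l₁.length by omega),
    List.getElem?_append_left (show i < l₁.length by omega), List.getElem?_append_left hi]

lemma colliderAt_append_right {l₁ l₂ : List V} {i : ℕ} (hi : 1 ≤ i) :
    G.ColliderAt (l₁ ++ l₂) (l₁.length + i) ↔ G.ColliderAt l₂ i := by
  simp only [ColliderAt,
    List.getElem?_append_right (show l₁.length ≤ l₁.length + i - 1 by omega),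
    List.getElem?_append_right (show l₁.length ≤ l₁.length + i by omega),
    List.getElem?_append_right (show l₁.length ≤ l₁.length + i + 1 by omega)]
  rw [show l₁.length + i - 1 - l₁.length = i - 1 by omega, Nat.add_sub_cancel_left,
    show l₁.length + i + 1 - l₁.length = i + 1 by omega]

lemma colliderAt_one {a b c : V} {t : List V} :
    G.ColliderAt (a :: b :: c :: t) 1 ↔ G.head a b ∧ G.head c b := by
  simp [ColliderAt]

def IsColliderWalk (G : MixedGraph V) : List V → Prop
  | a :: b :: c :: t => G.head a b ∧ G.head c b ∧ G.IsColliderWalk (b :: c :: t)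
  | [a, b] => G.adj a b
  | _ => True

lemma isColliderWalk_iff {l : List V} : G.IsColliderWalk l ↔
    l.IsChain G.adj ∧ ∀ i, 1 ≤ i → i + 1 < l.length → G.ColliderAt l i := by
  induction l with
  | nil => simp [IsColliderWalk]
  | cons a l ih =>
    rcases l with _ | ⟨b, _ | ⟨c, t⟩⟩
    · simp [IsColliderWalk]
    · simp +contextual [IsColliderWalk, show ∀ i, 1 ≤ i → ¬ i + 1 < 2 by omega]
    · have hshift : ∀ j, 1 ≤ j → (G.ColliderAt (a :: b :: c :: t) (j + 1) ↔
          G.ColliderAt (b :: c :: t) j) := fun j hj => by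
        rw [add_comm]; exact colliderAt_append_right (l₁ := [a]) hj
      simp only [IsColliderWalk, ih, List.isChain_cons_cons, List.length_cons]
      constructor
      · rintro ⟨hab, hcb, hchain, hcol⟩
        refine ⟨⟨adj_of_head hab, hchain⟩, fun i hi hlt => ?_⟩
        obtain rfl | ⟨j, hj, rfl⟩ : i = 1 ∨ ∃ j, 1 ≤ j ∧ i = j + 1 := by
          rcases i with _ | _ | j <;> simp_all
        · exact colliderAt_one.2 ⟨hab, hcb⟩
        · exact (hshift j hj).2 (hcol j hj (by simpa using hlt))
      · rintro ⟨⟨-, hchain⟩, hcol⟩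
        obtain ⟨hab, hcb⟩ := colliderAt_one.1 (hcol 1 le_rfl (by simp))
        exact ⟨hab, hcb, hchain, fun j hj hlt => (hshift j hj).1 (hcol (j + 1) (by omega)
          (by simpa using hlt))⟩

lemma isColliderPath_iff {l : List V} :
    G.IsColliderPath l ↔ G.IsColliderWalk l ∧ l.Nodup ∧ 2 ≤ l.length := by
  rw [isColliderWalk_iff, IsColliderPath, IsPath]
  tauto

namespace IsColliderWalk

lemma of_append_left {l₁ l₂ : List V} (h : G.IsColliderWalk (l₁ ++ l₂)) :
    G.IsColliderWalk l₁ := by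
  rw [isColliderWalk_iff] at h ⊢
  exact ⟨h.1.left_of_append, fun i hi hlt =>
    (colliderAt_append_left hlt).1 (h.2 i hi (by simp; omega))⟩

lemma of_append_right {l₁ l₂ : List V} (h : G.IsColliderWalk (l₁ ++ l₂)) :
    G.IsColliderWalk l₂ := by
  rw [isColliderWalk_iff] at h ⊢
  exact ⟨h.1.right_of_append, fun i hi hlt =>
    (colliderAt_append_right hi).1 (h.2 _ (by omega) (by simp; omega))⟩

lemma cons_of_head {x a b : V} {l : List V} (h : G.IsColliderWalk (x :: b :: l))
    (hab : G.head a b) : G.IsColliderWalk (a :: b :: l) := by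
  rcases l with _ | ⟨c, t⟩
  · exact adj_of_head hab
  · exact ⟨hab, h.2.1, h.2.2⟩

lemma append_overlap {xs ys : List V} {a b : V} (h₁ : G.IsColliderWalk (xs ++ [a, b]))
    (h₂ : G.IsColliderWalk (a :: b :: ys)) : G.IsColliderWalk (xs ++ a :: b :: ys) := by
  rw [isColliderWalk_iff] at h₁ h₂ ⊢
  refine ⟨?_, fun i hi hlt => ?_⟩
  · simpa using h₁.1.append_overlap (l₃ := ys) (by simpa using h₂.1) (by simp)
  · by_cases hleft : i ≤ xs.length
    · have h := h₁.2 i hi (by simp; omega)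
      rw [show xs ++ a :: b :: ys = (xs ++ [a, b]) ++ ys by simp]
      exact (colliderAt_append_left (by simp; omega)).2 h
    · obtain ⟨j, rfl⟩ : ∃ j, i = xs.length + j := ⟨i - xs.length, by omega⟩
      exact (colliderAt_append_right (by omega)).2 (h₂.2 j (by omega) (by simp at hlt ⊢; omega))

lemma reverse {l : List V} (h : G.IsColliderWalk l) : G.IsColliderWalk l.reverse := by
  induction l with
  | nil => trivial
  | cons a l ih =>
    rcases l with _ | ⟨b, _ | ⟨c, t⟩⟩
    · trivial
    · exact adj_symm h
    · obtain ⟨hab, hcb, h⟩ := h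
      have hcba : G.IsColliderWalk [c, b, a] := ⟨hcb, hab, adj_symm (adj_of_head hab)⟩
      have hrev : G.IsColliderWalk (t.reverse ++ [c, b]) := by simpa using ih h
      simpa using hrev.append_overlap hcba

lemma append_of_head {xs : List V} {a x y : V} (h : G.IsColliderWalk (xs ++ [a, x]))
    (hya : G.head y a) : G.IsColliderWalk (xs ++ [a, y]) := by
  have h' : G.IsColliderWalk (x :: a :: xs.reverse) := by simpa using h.reverse
  simpa using (h'.cons_of_head hya).reverse

end IsColliderWalk

lemma isColliderWalk_of_colliderAt_of_ne {l₁ l₂ : List V} {X : V}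
    (hchain : (l₁ ++ X :: l₂).IsChain G.adj) (hnd : (l₁ ++ X :: l₂).Nodup)
    (hcol : ∀ i v, 1 ≤ i → i + 1 < (l₁ ++ X :: l₂).length → (l₁ ++ X :: l₂)[i]? = some v →
      v ≠ X → G.ColliderAt (l₁ ++ X :: l₂) i) :
    G.IsColliderWalk (l₁ ++ [X]) ∧ G.IsColliderWalk (X :: l₂) := by
  obtain ⟨hXl₁, hXl₂⟩ : X ∉ l₁ ∧ X ∉ l₂ := by
    simp only [List.nodup_append, List.nodup_cons] at hnd
    exact ⟨fun h => hnd.2.2 X h X (by simp) rfl, hnd.2.1.1⟩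
  simp only [isColliderWalk_iff]
  refine ⟨⟨(by simpa using hchain : (l₁ ++ [X] ++ l₂).IsChain G.adj).left_of_append,
    fun i hi hlt => ?_⟩, ⟨hchain.right_of_append, fun i hi hlt => ?_⟩⟩
  · have hlt' : i < l₁.length := by simpa using hlt
    have hget : (l₁ ++ X :: l₂)[i]? = some l₁[i] := by
      rw [List.getElem?_append_left hlt', List.getElem?_eq_getElem hlt']
    have h := hcol i l₁[i] hi (by simp; omega) hget (fun h => hXl₁ (h ▸ List.getElem_mem hlt'))
    rw [show l₁ ++ X :: l₂ = (l₁ ++ [X]) ++ l₂ by simp] at h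
    exact (colliderAt_append_left hlt).1 h
  · have hlt' : i - 1 < l₂.length := by simp at hlt; omega
    have hget : (l₁ ++ X :: l₂)[l₁.length + i]? = some l₂[i - 1] := by
      rw [List.getElem?_append_right (by omega),
        show l₁.length + i - l₁.length = (i - 1) + 1 by omega]
      simp [List.getElem?_eq_getElem hlt']
    exact (colliderAt_append_right hi).1 (hcol _ _ (by omega) (by simp at hlt ⊢; omega) hget
      (fun h => hXl₂ (h ▸ List.getElem_mem hlt')))

lemma RemCond2.adj_of_isColliderWalk {X L c : V} (h2 : G.RemCond2 X) {p : List V}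
    (hw : G.IsColliderWalk (p ++ [c])) (hnd : (p ++ [c]).Nodup) (hX : p.head? = some X)
    (hL : L ∉ p ++ [c]) (hpL : ∀ v ∈ p, G.dir v L) : G.adj c L := by
  have hp : p ≠ [] := by rintro rfl; simp at hX
  refine h2 _ c L (isColliderPath_iff.2 ⟨hw, hnd, ?_⟩) (by simp [List.head?_append, hX])
    List.getLast?_concat hL (by rwa [List.dropLast_concat])
  simpa [Nat.one_le_iff_ne_zero] using hp

lemma RemCond2.exists_colliderWalk_suffix (hA : G.Ancestral) {X L : V} (h2 : G.RemCond2 X)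
    (r : List V) : ∀ (p : List V) (a : V), G.IsColliderWalk (p ++ a :: r) →
      (p ++ a :: r).Nodup → L ∉ p ++ a :: r → p.head? = some X → (∀ v ∈ p ++ [a], G.dir v L) →
      ∃ c t, c :: t <:+ a :: r ∧ G.head c L ∧ G.IsColliderWalk (L :: c :: t) := by
  induction r with
  | nil =>
    intro p a _ _ _ _ hpa
    have haL : G.dir a L := hpa a (by simp)
    exact ⟨a, [], List.suffix_refl _, Or.inl haL, adj_symm (Or.inl haL)⟩
  | cons c r ih =>
    intro p a hw hnd hL hX hpa
    have hXp : X ∈ p := List.mem_of_mem_head? hX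
    have hw' : G.IsColliderWalk (p ++ [a] ++ [c] ++ r) := by simpa using hw
    have hnd' : (p ++ [a] ++ [c] ++ r).Nodup := by simpa using hnd
    have hcL : G.adj c L :=
      h2.adj_of_isColliderWalk hw'.of_append_left (hnd'.sublist (List.sublist_append_left _ _))
        (by simp [List.head?_append, hX]) (fun h => hL (by simp at h ⊢; tauto)) hpa
    rcases hcL with hcL | hLc | hcL | hcL
    · obtain ⟨c', t, hsuf, hh, hwL⟩ := ih (p ++ [a]) c (by simpa using hw) (by simpa using hnd)
        (by simpa using hL) (by simp [List.head?_append, hX])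
        (by simpa [or_imp, forall_and] using
          ⟨fun v hv => hpa v (by simp [hv]), hpa a (by simp), hcL⟩)
      exact ⟨c', t, hsuf.trans (List.suffix_cons a _), hh, hwL⟩
    · -- `a → L → c` while the collider `a` receives an arrowhead from `c`
      obtain ⟨p, w, rfl⟩ := (List.eq_nil_or_concat' p).resolve_left (List.ne_nil_of_mem hXp)
      have hwa : G.IsColliderWalk (w :: a :: c :: r) :=
        (by simpa using hw : G.IsColliderWalk (p ++ w :: a :: c :: r)).of_append_right
      have haL : G.dir a L := hpa a (by simp)
      exact (hA.not_head_of_anc ((Relation.ReflTransGen.single haL).tail hLc) hwa.2.1).elim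
    · refine ⟨c, r, List.suffix_cons a _, Or.inr hcL, ?_⟩
      exact (hw.of_append_right (l₁ := p)).cons_of_head (Or.inr (G.bi_symm _ _ hcL))
    · exact absurd (hpa X (by simp [hXp])) (hA.2.2 L c (G.und_symm _ _ hcL) X).1

def HasColliderSubwalk (G : MixedGraph V) (u : List V) : Prop :=
  ∃ q, q.Sublist u ∧ q.head? = u.head? ∧ q.getLast? = u.getLast? ∧ G.IsColliderWalk q

lemma HasColliderSubwalk.reverse {u : List V} (h : G.HasColliderSubwalk u) :
    G.HasColliderSubwalk u.reverse := by
  obtain ⟨q, hsub, hhead, hlast, hq⟩ := h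
  exact ⟨q.reverse, hsub.reverse, by simp [hlast], by simp [hhead], hq.reverse⟩

lemma hasColliderSubwalk_of_dir_of_dir (hA : G.Ancestral) {X P W : V} (h2 : G.RemCond2 X)
    {l r : List V} (hl : G.IsColliderWalk (l ++ [P, X])) (hr : G.IsColliderWalk (X :: W :: r))
    (hnd : (l ++ P :: X :: W :: r).Nodup) (hXP : G.dir X P) (hWP : G.dir W P) :
    G.HasColliderSubwalk (l ++ P :: X :: W :: r) := by
  have hndr : (X :: W :: r).Nodup := (List.nodup_cons.1 (List.nodup_append.1 hnd).2.1).2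
  have hPr : P ∉ X :: W :: r := (List.nodup_cons.1 (List.nodup_append.1 hnd).2.1).1
  obtain ⟨c, t, hsuf, hcP, hw⟩ := h2.exists_colliderWalk_suffix hA r [X] W hr hndr hPr rfl
    (by simp [hXP, hWP])
  refine ⟨l ++ P :: c :: t, ?_, by simp [List.head?_append], ?_, ?_⟩
  · exact ((hsuf.sublist.trans (List.sublist_cons_self X _)).cons_cons P).append_left l
  · obtain ⟨s, hs⟩ := hsuf
    rw [show l ++ P :: X :: W :: r = (l ++ [P, X] ++ s) ++ c :: t by simp [← hs],
      show l ++ P :: c :: t = (l ++ [P]) ++ c :: t by simp]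
    simp only [List.getLast?_append_of_ne_nil _ (List.cons_ne_nil c t)]
  · exact (hl.append_of_head hcP).append_overlap hw

theorem hasColliderSubwalk_of_remCond (hA : G.Ancestral) {X W : V} (h1 : G.RemCond1 X)
    (h2 : G.RemCond2 X) {L r : List V} (hl : G.IsColliderWalk (L ++ [X]))
    (hr : G.IsColliderWalk (X :: W :: r)) (hnd : (L ++ X :: W :: r).Nodup) (hXW : G.dir X W) :
    G.HasColliderSubwalk (L ++ X :: W :: r) := by
  obtain rfl | ⟨l, P, rfl⟩ := L.eq_nil_or_concat'
  · exact ⟨_, List.Sublist.refl _, rfl, rfl, hr⟩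
  simp only [List.append_assoc, List.cons_append, List.nil_append] at hl hnd ⊢
  have hXP : G.adj X P := adj_symm (hl.of_append_right (l₁ := l))
  have hWP : W ≠ P := by
    rintro rfl
    exact (List.nodup_cons.1 (List.nodup_append.1 hnd).2.1).1 (by simp)
  rcases h1 P W hXP (Or.inl hXW) hWP with hPW | hWP | hPW | hPW
  · simpa using (hasColliderSubwalk_of_dir_of_dir hA h2 (l := r.reverse) (r := l.reverse)
      (by simpa using hr.reverse) (by simpa using hl.reverse)
      (by simpa using List.nodup_reverse.2 hnd) hXW hPW).reverse
  · exact hasColliderSubwalk_of_dir_of_dir hA h2 hl hr hnd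
      (hA.dir_of_adj_of_dir_of_dir hXW hWP hXP) hWP
  · refine ⟨l ++ P :: W :: r, ((List.sublist_cons_self X _).cons_cons P).append_left l,
      by simp [List.head?_append], by simp [List.getLast?_append], ?_⟩
    exact (hl.append_of_head (Or.inr (G.bi_symm _ _ hPW))).append_overlap
      (hr.cons_of_head (Or.inr hPW))
  · exact absurd hXW (hA.2.2 W P (G.und_symm _ _ hPW) X).1

end MixedGraph

open MixedGraph in
theorem stmt17_general {V : Type*} (G : MixedGraph V) (hG : G.IsMAG)
    (vs ws : List V) (X Y Z W₁ : V)
    (hpath : G.IsPath ((Y :: vs) ++ (X :: W₁ :: ws) ++ [Z]))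
    (hcol : ∀ i v, 1 ≤ i → i + 1 < ((Y :: vs) ++ (X :: W₁ :: ws) ++ [Z]).length →
      ((Y :: vs) ++ (X :: W₁ :: ws) ++ [Z])[i]? = some v → v ≠ X →
      G.ColliderAt ((Y :: vs) ++ (X :: W₁ :: ws) ++ [Z]) i)
    (hch : G.dir X W₁)
    (h1 : G.RemCond1 X) (h2 : G.RemCond2 X) :
    ∃ q : List V, G.IsColliderPath q ∧ q.head? = some Y ∧
      q.getLast? = some Z ∧
      ∀ v ∈ q, v = Y ∨ v = Z ∨ v = X ∨ v ∈ vs ∨ v = W₁ ∨ v ∈ ws := by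
  obtain ⟨hchain, hnd, -⟩ := hpath
  rw [show (Y :: vs) ++ (X :: W₁ :: ws) ++ [Z] = (Y :: vs) ++ X :: W₁ :: (ws ++ [Z]) by simp]
    at hchain hnd hcol
  obtain ⟨hl, hr⟩ := isColliderWalk_of_colliderAt_of_ne hchain hnd hcol
  obtain ⟨q, hsub, hhead, hlast, hq⟩ := hasColliderSubwalk_of_remCond hG.1 h1 h2 hl hr hnd hch
  replace hlast : q.getLast? = some Z := hlast.trans <| by
    rw [show (Y :: vs) ++ X :: W₁ :: (ws ++ [Z]) = (Y :: vs ++ X :: W₁ :: ws) ++ [Z] by simp]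
    exact List.getLast?_concat
  have hYZ : Y ≠ Z := fun h => (List.nodup_cons.1 hnd).1 (by simp [h])
  have hlen : 2 ≤ q.length := by
    rcases q with _ | ⟨a, _ | ⟨b, t⟩⟩ <;> simp_all
  refine ⟨q, isColliderPath_iff.2 ⟨hq, hsub.nodup hnd, hlen⟩, by simpa using hhead,
    hlast, fun v hv => ?_⟩
  have hvu := hsub.subset hv
  simp only [List.cons_append, List.mem_cons, List.mem_append] at hvu
  tauto

open MixedGraph in
/-- suppose `u = (Y, V₁, …, V_i, X, W₁, …, W_j, Z)` is a path in
a MAG whose non-endpoint vertices other than `X` are all colliders, `X` is a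
non-collider on `u`, `W₁` is a child of `X`, `X` satisfies the adjacency
conditions of removability, and no child of `X` is a parent of a spouse of
`X`. Then there is a collider path between `Y` and `Z` passing only through
the vertices `{V₁, …, V_i, W₁, …, W_j, X}`. -/
theorem stmt17 {V : Type*} (G : MixedGraph V) (hG : G.IsMAG)
    (vs ws : List V) (X Y Z W₁ : V)
    (hpath : G.IsPath ((Y :: vs) ++ (X :: W₁ :: ws) ++ [Z]))
    (hcol : ∀ i v, 1 ≤ i → i + 1 < ((Y :: vs) ++ (X :: W₁ :: ws) ++ [Z]).length →
      ((Y :: vs) ++ (X :: W₁ :: ws) ++ [Z])[i]? = some v → v ≠ X →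
      G.ColliderAt ((Y :: vs) ++ (X :: W₁ :: ws) ++ [Z]) i)
    (hXnc : ¬ G.ColliderAt ((Y :: vs) ++ (X :: W₁ :: ws) ++ [Z]) (vs.length + 1))
    (hch : G.dir X W₁)
    (h1 : G.RemCond1 X) (h2 : G.RemCond2 X)
    (hcs : ∀ c s : V, G.dir X c → G.bi X s → ¬ G.dir c s) :
    ∃ q : List V, G.IsColliderPath q ∧ q.head? = some Y ∧
      q.getLast? = some Z ∧
      ∀ v ∈ q, v = Y ∨ v = Z ∨ v = X ∨ v ∈ vs ∨ v = W₁ ∨ v ∈ ws :=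
  stmt17_general G hG vs ws X Y Z W₁ hpath hcol hch h1 h2
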